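/- arXiv:1201.5558 — 3 statements merged into one kernel-verified Lean document; each statement's English description precedes it below -/
import Mathlib

section
/- Let f : (0,∞) → ℂ be locally absolutely continuous, of bounded variation on (0,∞), with lim_{t→∞} f(t) = 0 (so that its derivative f' is Lebesgue integrable on (0,∞)). Then the cosine Fourier transform f̂_c(x) = ∫_0^∞ f(t) cos(xt) dt is Lebesgue integrable on (0,∞) if and only if ∫_0^∞ |f̂'_s(x)|/x dx < ∞, where f̂'_s(x) = ∫_0^∞ f'(t) sin(xt) dt is the sine Fourier transform of f'. (That is, f̂_c ∈ L^1(0,∞) if and only if f' belongs to the space Q_0.) -/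
open MeasureTheory Filter Set Real

/-!
Since `f` vanishes at infinity, `f t = -∫_t^∞ f'`. Exchanging the order of integration over the
triangle `0 < t < s`, `t ≤ N` gives
`∫_0^N f(t) cos(xt) dt = -x⁻¹ ∫_0^∞ f'(s) sin(x min(N, s)) ds`, and dominated convergence as
`N → ∞` yields `f̂_c(x) = -f̂'_s(x) / x` for every `x > 0`. Hence `|f̂_c(x)| = |f̂'_s(x)| / x`,
and `f̂_c` is measurable because `f̂'_s` is continuous, so the two integrability conditions agree.
-/

noncomputable def sineTransform (g : ℝ → ℂ) (x : ℝ) : ℂ :=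
  ∫ t in Ioi 0, g t * (sin (x * t) : ℂ)

lemma norm_mul_ofReal_le_of_abs_le_one (z : ℂ) {r : ℝ} (hr : |r| ≤ 1) : ‖z * r‖ ≤ ‖z‖ := by
  rw [norm_mul, Complex.norm_real, Real.norm_eq_abs]
  exact mul_le_of_le_one_right (norm_nonneg z) hr

lemma eq_neg_integral_Ioi_of_tendsto_atTop_zero {E : Type*} [NormedAddCommGroup E]
    [NormedSpace ℝ E] [CompleteSpace E] {f f' : ℝ → E} {t : ℝ}
    (hac : ∀ b, t ≤ b → f b - f t = ∫ s in t..b, f' s)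
    (hlim : Tendsto f atTop (nhds 0)) (hf' : IntegrableOn f' (Ioi t)) :
    f t = -∫ s in Ioi t, f' s := by
  have hsub : Tendsto (fun b => f b - f t) atTop (nhds (0 - f t)) :=
    hlim.sub tendsto_const_nhds
  have := tendsto_nhds_unique (hsub.congr' (eventually_atTop.2 ⟨t, hac⟩))
    (intervalIntegral_tendsto_integral_Ioi t hf' tendsto_id)
  rw [← this, zero_sub, neg_neg]

lemma integral_cos_mul {x : ℝ} (hx : x ≠ 0) (a : ℝ) :
    ∫ t in (0 : ℝ)..a, cos (x * t) = sin (x * a) / x := by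
  rw [intervalIntegral.integral_comp_mul_left (fun t => cos t) hx, integral_cos, mul_zero,
    sin_zero, sub_zero, smul_eq_mul, inv_mul_eq_div]

lemma integral_Ioc_integral_Ioi_mul_cos {g : ℝ → ℂ} (hg : IntegrableOn g (Ioi 0)) {x : ℝ}
    (hx : x ≠ 0) {N : ℝ} (hN : 0 ≤ N) :
    ∫ t in Ioc 0 N, (∫ s in Ioi t, g s) * (cos (x * t) : ℂ) =
      (x : ℂ)⁻¹ * ∫ s in Ioi 0, g s * (sin (x * min N s) : ℂ) := by
  set μ := volume.restrict (Ioo (0 : ℝ) N)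
  set ν := volume.restrict (Ioi (0 : ℝ))
  have : IsFiniteMeasure μ := isFiniteMeasure_restrict.2 measure_Ioo_lt_top.ne
  set H : ℝ × ℝ → ℂ := {q : ℝ × ℝ | q.1 < q.2}.indicator fun q => g q.2 * (cos (x * q.1) : ℂ)
  have hH : Integrable H (μ.prod ν) := by
    refine Integrable.mono' (((integrable_const (1 : ℝ)).mul_prod hg.norm).congr
      (ae_of_all _ fun p => one_mul _)) ?_ (ae_of_all _ fun p => ?_)
    · exact ((hg.1.comp_snd).mul (by fun_prop : Continuous fun q : ℝ × ℝ =>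
        (cos (x * q.1) : ℂ)).aestronglyMeasurable).indicator
        (measurableSet_lt measurable_fst measurable_snd)
    · exact (norm_indicator_le_norm_self _ _).trans
        (norm_mul_ofReal_le_of_abs_le_one _ (abs_cos_le_one _))
  have inner_s : ∀ t ∈ Ioo 0 N, ∫ s, H (t, s) ∂ν = (∫ s in Ioi t, g s) * (cos (x * t) : ℂ) := by
    intro t ht
    have hH_t : (fun s => H (t, s)) = (Ioi t).indicator fun s => g s * (cos (x * t) : ℂ) := by
      ext s; simp [H, indicator]
    rw [← integral_mul_const, hH_t, setIntegral_indicator measurableSet_Ioi, Ioi_inter_Ioi,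
      max_eq_right ht.1.le]
  have inner_t : ∀ s ∈ Ioi (0 : ℝ), ∫ t, H (t, s) ∂μ =
      (x : ℂ)⁻¹ * (g s * (sin (x * min N s) : ℂ)) := by
    intro s hs
    have hH_s : (fun t => H (t, s)) = (Iio s).indicator fun t => g s * (cos (x * t) : ℂ) := by
      ext t; simp [H, indicator]
    rw [hH_s, setIntegral_indicator measurableSet_Iio, Ioo_inter_Iio, integral_const_mul,
      integral_complex_ofReal, ← integral_Ioc_eq_integral_Ioo,
      ← intervalIntegral.integral_of_le (le_min hN (le_of_lt hs)), integral_cos_mul hx]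
    push_cast
    ring
  calc ∫ t in Ioc 0 N, (∫ s in Ioi t, g s) * (cos (x * t) : ℂ)
      = ∫ t, ∫ s, H (t, s) ∂ν ∂μ := by
        rw [integral_Ioc_eq_integral_Ioo]
        exact setIntegral_congr_fun measurableSet_Ioo fun t ht => (inner_s t ht).symm
    _ = ∫ s, ∫ t, H (t, s) ∂μ ∂ν := integral_integral_swap hH
    _ = (x : ℂ)⁻¹ * ∫ s in Ioi 0, g s * (sin (x * min N s) : ℂ) := by
        rw [← integral_const_mul]
        exact setIntegral_congr_fun measurableSet_Ioi inner_t

lemma tendsto_integral_mul_sin_min {g : ℝ → ℂ} (hg : IntegrableOn g (Ioi 0)) (x : ℝ) :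
    Tendsto (fun N => ∫ s in Ioi 0, g s * (sin (x * min N s) : ℂ)) atTop
      (nhds (sineTransform g x)) := by
  refine tendsto_integral_filter_of_dominated_convergence (fun s => ‖g s‖)
    (Eventually.of_forall fun N => hg.1.mul (by fun_prop : Continuous fun s =>
      (sin (x * min N s) : ℂ)).aestronglyMeasurable)
    (Eventually.of_forall fun N => ae_of_all _ fun s =>
      norm_mul_ofReal_le_of_abs_le_one _ (abs_sin_le_one _))
    hg.norm (ae_of_all _ fun s => tendsto_const_nhds.congr' ?_)
  filter_upwards [eventually_ge_atTop s] with N hN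
  rw [min_eq_right hN]

lemma continuous_sineTransform {g : ℝ → ℂ} (hg : IntegrableOn g (Ioi 0)) :
    Continuous (sineTransform g) :=
  continuous_of_dominated
    (fun x => hg.1.mul (by fun_prop : Continuous fun t => (sin (x * t) : ℂ)).aestronglyMeasurable)
    (fun x => ae_of_all _ fun t => norm_mul_ofReal_le_of_abs_le_one _ (abs_sin_le_one _))
    hg.norm (ae_of_all _ fun t => by fun_prop)

lemma tendsto_intervalIntegral_mul_cos {f f' : ℝ → ℂ}
    (hac : ∀ a b : ℝ, 0 < a → a ≤ b → f b - f a = ∫ t in a..b, f' t)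
    (hlim : Tendsto f atTop (nhds 0)) (hf' : IntegrableOn f' (Ioi 0)) {x : ℝ} (hx : x ≠ 0) :
    Tendsto (fun N : ℝ => ∫ t in (0 : ℝ)..N, f t * (cos (x * t) : ℂ)) atTop
      (nhds (-((x : ℂ)⁻¹ * sineTransform f' x))) := by
  have hf : ∀ t, 0 < t → f t = -∫ s in Ioi t, f' s := fun t ht =>
    eq_neg_integral_Ioi_of_tendsto_atTop_zero (fun b hb => hac t b ht hb) hlim
      (hf'.mono_set (Ioi_subset_Ioi ht.le))
  refine ((tendsto_integral_mul_sin_min hf' x).const_mul _).neg.congr' ?_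
  filter_upwards [eventually_ge_atTop 0] with N hN
  rw [intervalIntegral.integral_of_le hN, ← integral_Ioc_integral_Ioi_mul_cos hf' hx hN,
    ← integral_neg]
  refine setIntegral_congr_fun measurableSet_Ioc fun t ht => ?_
  rw [hf t ht.1, neg_mul]

theorem cosine_fourier_transform_integrable_iff_Q0_general (f f' fc : ℝ → ℂ)
    -- local absolute continuity on (0,∞) with derivative f'
    (hac : ∀ a b : ℝ, 0 < a → a ≤ b → f b - f a = ∫ t in a..b, f' t)
    -- vanishing at infinity
    (hlim : Filter.Tendsto f Filter.atTop (nhds 0))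
    -- f' is Lebesgue integrable on (0,∞)
    (hf' : MeasureTheory.IntegrableOn f' (Set.Ioi 0))
    -- fc is the (improper) cosine Fourier transform of f
    (hfc : ∀ x : ℝ, 0 < x →
      Filter.Tendsto (fun N : ℝ => ∫ t in (0 : ℝ)..N, f t * (Real.cos (x * t) : ℂ))
        Filter.atTop (nhds (fc x))) :
    MeasureTheory.IntegrableOn fc (Set.Ioi 0) ↔
      (∫⁻ x in Set.Ioi (0 : ℝ),
        ENNReal.ofReal (‖∫ t in Set.Ioi (0 : ℝ), f' t * (Real.sin (x * t) : ℂ)‖ / x)) < ⊤ := by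
  have hfc_eq : EqOn fc (fun x => -((x : ℂ)⁻¹ * sineTransform f' x)) (Ioi 0) := fun x hx =>
    tendsto_nhds_unique (hfc x hx) (tendsto_intervalIntegral_mul_cos hac hlim hf' hx.ne')
  have hmeas : AEStronglyMeasurable fc (volume.restrict (Ioi 0)) := by
    refine (ContinuousOn.aestronglyMeasurable ?_ measurableSet_Ioi).congr
      ((ae_restrict_iff' measurableSet_Ioi).2 (ae_of_all _ fun x hx => (hfc_eq hx).symm))
    exact ((Complex.continuous_ofReal.continuousOn.inv₀ fun x hx =>
      Complex.ofReal_ne_zero.2 (ne_of_gt hx)).mul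
      (continuous_sineTransform hf').continuousOn).neg
  have hnorm : ∀ x ∈ Ioi (0 : ℝ), ‖fc x‖ = ‖sineTransform f' x‖ / x := fun x hx => by
    rw [hfc_eq hx, norm_neg, norm_mul, norm_inv, Complex.norm_real, Real.norm_of_nonneg hx.le,
      inv_mul_eq_div]
  rw [IntegrableOn, Integrable, and_iff_right hmeas, hasFiniteIntegral_iff_norm]
  exact Iff.of_eq (congrArg (· < ⊤) (setLIntegral_congr_fun measurableSet_Ioi
    fun x hx => congrArg ENNReal.ofReal (hnorm x hx)))

/-- **Theorem 2.** If `f : (0,∞) → ℂ` is locally absolutely continuous (with derivative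
`f'`), of bounded variation, and tends to `0` at infinity (so `f'` is integrable on
`(0,∞)`), then the (improper) cosine Fourier transform `f̂_c(x) = ∫_0^∞ f(t) cos(xt) dt`
is Lebesgue integrable on `(0,∞)` if and only if `∫_0^∞ |f̂'_s(x)|/x dx < ∞`, i.e. iff
`f'` belongs to the space `Q₀`, where `f̂'_s(x) = ∫_0^∞ f'(t) sin(xt) dt`. -/
theorem cosine_fourier_transform_integrable_iff_Q0 (f f' fc : ℝ → ℂ)
    -- local absolute continuity on (0,∞) with derivative f'
    (hac : ∀ a b : ℝ, 0 < a → a ≤ b → f b - f a = ∫ t in a..b, f' t)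
    -- bounded variation on (0,∞)
    (hbv : BoundedVariationOn f (Set.Ioi 0))
    -- vanishing at infinity
    (hlim : Filter.Tendsto f Filter.atTop (nhds 0))
    -- f' is Lebesgue integrable on (0,∞)
    (hf' : MeasureTheory.IntegrableOn f' (Set.Ioi 0))
    -- fc is the (improper) cosine Fourier transform of f
    (hfc : ∀ x : ℝ, 0 < x →
      Filter.Tendsto (fun N : ℝ => ∫ t in (0 : ℝ)..N, f t * (Real.cos (x * t) : ℂ))
        Filter.atTop (nhds (fc x))) :
    MeasureTheory.IntegrableOn fc (Set.Ioi 0) ↔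
      (∫⁻ x in Set.Ioi (0 : ℝ),
        ENNReal.ofReal (‖∫ t in Set.Ioi (0 : ℝ), f' t * (Real.sin (x * t) : ℂ)‖ / x)) < ⊤ :=
  cosine_fourier_transform_integrable_iff_Q0_general f f' fc hac hlim hf' hfc
end

section
/- Let g : ℝ → ℂ be Lebesgue integrable and suppose ∫_ℝ |ĝ(x)|/|x| dx < ∞, where ĝ(x) = ∫_ℝ g(t) e^{−ixt} dt is the Fourier transform of g (i.e., g belongs to the space Q). Then g satisfies the cancelation property ∫_ℝ g(t) dt = 0. -/
/-!
The Fourier transform `ĝ` of an integrable `g` is continuous with `ĝ(0) = ∫ g`. If `∫ g ≠ 0`,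
then `|ĝ|` stays above a positive constant near `0`, and `∫ |ĝ(x)|/|x| dx` diverges like
`∫₀^δ dx/x`.
-/

open MeasureTheory Filter Set Topology

theorem continuous_integral_mul_exp_neg_I_mul {μ : Measure ℝ} {g : ℝ → ℂ} (hg : Integrable g μ) :
    Continuous fun x : ℝ => ∫ t, g t * Complex.exp (-(Complex.I) * (x : ℂ) * (t : ℂ)) ∂μ := by
  refine continuous_of_dominated (bound := fun t => ‖g t‖) (fun x => ?_) (fun x => ?_) hg.norm ?_
  · exact hg.aestronglyMeasurable.mul (by fun_prop : Continuous _).aestronglyMeasurable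
  · refine Eventually.of_forall fun t => ?_
    rw [norm_mul, Complex.norm_exp]
    simp
  · exact Eventually.of_forall fun t => by fun_prop

theorem setLIntegral_Ioo_zero_ofReal_inv_eq_top {δ : ℝ} (hδ : 0 < δ) :
    ∫⁻ x in Ioo 0 δ, ENNReal.ofReal x⁻¹ = ⊤ := by
  by_contra h
  have hint : IntegrableOn (fun x : ℝ => x⁻¹) (Ioo 0 δ) :=
    (lintegral_ofReal_ne_top_iff_integrable measurable_inv.aestronglyMeasurable
      ((ae_restrict_mem measurableSet_Ioo).mono fun x hx => inv_nonneg.2 hx.1.le)).1 h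
  rw [← intervalIntegrable_iff_integrableOn_Ioo_of_le hδ.le, intervalIntegrable_inv_iff,
    uIcc_of_le hδ.le] at hint
  exact hint.elim hδ.ne (· (left_mem_Icc.2 hδ.le))

theorem lintegral_ofReal_div_abs_eq_top {f : ℝ → ℝ} {c : ℝ} (hc : 0 < c)
    (hf : ∀ᶠ x in 𝓝 0, c ≤ f x) : ∫⁻ x, ENNReal.ofReal (f x / |x|) = ⊤ := by
  obtain ⟨δ, hδ, hball⟩ := Metric.eventually_nhds_iff.1 hf
  refine eq_top_mono ?_ (ENNReal.mul_eq_top.2 (Or.inl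
    ⟨ENNReal.ofReal_pos.2 hc |>.ne', setLIntegral_Ioo_zero_ofReal_inv_eq_top hδ⟩))
  calc ENNReal.ofReal c * ∫⁻ x in Ioo 0 δ, ENNReal.ofReal x⁻¹
      = ∫⁻ x in Ioo 0 δ, ENNReal.ofReal (c * x⁻¹) := by
        rw [← lintegral_const_mul _ measurable_inv.ennreal_ofReal]
        simp_rw [ENNReal.ofReal_mul hc.le]
    _ ≤ ∫⁻ x in Ioo 0 δ, ENNReal.ofReal (f x / |x|) := by
        refine setLIntegral_mono' measurableSet_Ioo fun x hx => ENNReal.ofReal_le_ofReal ?_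
        have hcx : c ≤ f x := hball (by rw [Real.dist_eq, sub_zero, abs_of_pos hx.1]; exact hx.2)
        rw [abs_of_pos hx.1, div_eq_mul_inv]
        gcongr
        exact inv_nonneg.2 hx.1.le
    _ ≤ ∫⁻ x, ENNReal.ofReal (f x / |x|) := setLIntegral_le_lintegral _ _

theorem lintegral_ofReal_norm_div_abs_eq_top {E : Type*} [NormedAddCommGroup E] {f : ℝ → E}
    (hf : ContinuousAt f 0) (hf0 : f 0 ≠ 0) : ∫⁻ x, ENNReal.ofReal (‖f x‖ / |x|) = ⊤ :=
  lintegral_ofReal_div_abs_eq_top (by positivity)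
    (hf.norm.eventually (eventually_ge_nhds (half_lt_self (norm_pos_iff.2 hf0))))

/-- **Q ⊆ L¹₀(ℝ).** If `g ∈ L¹(ℝ)` and `∫_ℝ |ĝ(x)|/|x| dx < ∞`, i.e. `g` belongs to the
space `Q`, where `ĝ(x) = ∫_ℝ g(t) e^{−ixt} dt`, then `g` has the cancelation property
`∫_ℝ g(t) dt = 0`. -/
theorem integral_eq_zero_of_mem_Q (g : ℝ → ℂ)
    -- g is Lebesgue integrable on ℝ
    (hg : MeasureTheory.Integrable g)
    -- g ∈ Q : ∫_ℝ |ĝ(x)|/|x| dx < ∞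
    (hQ : (∫⁻ x : ℝ,
        ENNReal.ofReal
          (‖∫ t : ℝ, g t * Complex.exp (-(Complex.I) * (x : ℂ) * (t : ℂ))‖ / |x|)) < ⊤) :
    ∫ t : ℝ, g t = 0 := by
  by_contra hne
  refine hQ.ne (lintegral_ofReal_norm_div_abs_eq_top
    (continuous_integral_mul_exp_neg_I_mul hg).continuousAt ?_)
  simpa using hne
end

section
/- For all a > 0 and y > 0, the principal value integral satisfies lim_{δ→0+} ∫_{{x>0 : |x−a|>δ}} sin(yx)/(a² − x²) dx = (1/a)[sin(ay)·Ci(ay) − cos(ay)·Si(ay)], where Ci(u) = −∫_u^∞ (cos t)/t dt is the cosine integral and Si(u) = ∫_0^u (sin t)/t dt is the sine integral. -/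
/-!
Partial fractions and the addition formulas for `sin` show that
`G(x) = (cos(ay)(Si(y(x+a)) - Si(y(x-a))) - sin(ay)(Ci(y|x-a|) + Ci(y(x+a)))) / (2a)`
is a primitive of `sin(yx)/(a² - x²)` on both sides of the pole `x = a`, and `G → 0` at
infinity. Hence the integral over `(0, a-δ) ∪ (a+δ, ∞)` is `-G(0) - (G(a+δ) - G(a-δ))`.
In the jump `G(a+δ) - G(a-δ)` the divergent terms `Ci(yδ)` cancel and what remains is
continuous in `δ` and vanishes at `δ = 0`, so the principal value is `-G(0)`.
-/

open MeasureTheory Filter Set Real intervalIntegral Topology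

noncomputable section

def Si (x : ℝ) : ℝ := ∫ t in (0 : ℝ)..x, sin t / t

lemma Si_eq_integral_sinc (x : ℝ) : Si x = ∫ t in (0 : ℝ)..x, sinc t := by
  refine integral_congr_ae ?_
  filter_upwards [Measure.ae_ne volume 0] with t ht _
  rw [sinc_of_ne_zero ht]

lemma hasDerivAt_Si (x : ℝ) : HasDerivAt Si (sinc x) x := by
  rw [show Si = fun x => ∫ t in (0 : ℝ)..x, sinc t from funext Si_eq_integral_sinc]
  exact continuous_sinc.integral_hasStrictDerivAt 0 x |>.hasDerivAt

@[fun_prop]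
lemma continuous_Si : Continuous Si :=
  continuous_iff_continuousAt.2 fun x => (hasDerivAt_Si x).continuousAt

lemma Si_neg (x : ℝ) : Si (-x) = -Si x := by
  have := integral_comp_neg (a := x) (b := 0) (fun t => sin t / t)
  simp only [neg_zero, sin_neg, neg_div_neg_eq] at this
  rw [Si, ← this, integral_symm, Si]

lemma Si_sub_Si_eq_integral_sinc (p q : ℝ) : Si q - Si p = ∫ t in p..q, sinc t := by
  simp only [Si_eq_integral_sinc]
  exact integral_interval_sub_left (continuous_sinc.intervalIntegrable _ _)
    (continuous_sinc.intervalIntegrable _ _)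

lemma abs_Si_add_sub_Si_le {x c : ℝ} (hx : |c| < x) :
    |Si (x + c) - Si x| ≤ |c| / (x - |c|) := by
  have hpos : 0 < x - |c| := by linarith
  rw [Si_sub_Si_eq_integral_sinc, div_eq_inv_mul]
  refine (intervalIntegral.norm_integral_le_of_norm_le_const (f := sinc) (a := x) (b := x + c)
    (C := (x - |c|)⁻¹) fun t ht => ?_).trans_eq (by rw [add_sub_cancel_left])
  have ht : x - |c| < t :=
    (le_min (by linarith [abs_nonneg c]) (by linarith [neg_abs_le c])).trans_lt ht.1
  rw [norm_eq_abs]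
  calc |sinc t| ≤ |t|⁻¹ := by
        rw [sinc_of_ne_zero (by linarith), abs_div, ← one_div]
        exact div_le_div_of_nonneg_right (abs_sin_le_one t) (abs_nonneg t)
    _ ≤ (x - |c|)⁻¹ := by rw [abs_of_pos (by linarith)]; exact inv_anti₀ hpos ht.le

lemma tendsto_Si_add_sub_Si (c : ℝ) : Tendsto (fun x => Si (x + c) - Si x) atTop (𝓝 0) := by
  have hlim : Tendsto (fun x => |c| / (x - |c|)) atTop (𝓝 0) :=
    tendsto_const_nhds.div_atTop (tendsto_atTop_add_const_right _ _ tendsto_id)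
  refine squeeze_zero_norm' ?_ hlim
  filter_upwards [eventually_gt_atTop |c|] with x hx
  exact abs_Si_add_sub_Si_le hx

lemma intervalIntegrable_cos_div {p q : ℝ} (hp : 0 < p) (hq : 0 < q) :
    IntervalIntegrable (fun t => cos t / t) volume p q :=
  (continuousOn_cos.div continuousOn_id fun _ ht =>
    ((lt_min hp hq).trans_le ht.1).ne').intervalIntegrable

def IsCosIntegral (Ci : ℝ → ℝ) : Prop :=
  ∀ u : ℝ, 0 < u → Tendsto (fun A : ℝ => ∫ t in u..A, cos t / t) atTop (𝓝 (-Ci u))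

namespace IsCosIntegral

variable {Ci : ℝ → ℝ}

lemma integral_cos_div_eq_sub (hCi : IsCosIntegral Ci) {p q : ℝ} (hp : 0 < p) (hq : 0 < q) :
    ∫ t in p..q, cos t / t = Ci q - Ci p := by
  have hlim := (hCi p hp).sub (hCi q hq)
  refine tendsto_nhds_unique (tendsto_const_nhds.congr' ?_) (by rwa [neg_sub_neg] at hlim)
  filter_upwards [eventually_gt_atTop 0] with A hA
  rw [eq_sub_iff_add_eq, integral_add_adjacent_intervals (intervalIntegrable_cos_div hp hq)
    (intervalIntegrable_cos_div hq hA)]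

lemma hasDerivAt (hCi : IsCosIntegral Ci) {x : ℝ} (hx : 0 < x) : HasDerivAt Ci (cos x / x) x := by
  have hderiv : HasDerivAt (fun z => Ci x + ∫ t in x..z, cos t / t) (cos x / x) x := by
    refine (integral_hasDerivAt_right (intervalIntegrable_cos_div hx hx) ?_ ?_).const_add _
    · exact (continuousOn_cos.div continuousOn_id fun t ht => ht.ne').stronglyMeasurableAtFilter
        isOpen_Ioi _ hx
    · exact continuous_cos.continuousAt.div continuousAt_id hx.ne'
  refine hderiv.congr_of_eventuallyEq ?_
  filter_upwards [Ioi_mem_nhds hx] with z hz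
  rw [integral_cos_div_eq_sub hCi hx hz, add_sub_cancel]

lemma tendsto_atTop (hCi : IsCosIntegral Ci) : Tendsto Ci atTop (𝓝 0) := by
  have hlim := (hCi 1 one_pos).const_add (Ci 1)
  rw [add_neg_cancel] at hlim
  refine hlim.congr' ?_
  filter_upwards [eventually_gt_atTop 0] with A hA
  rw [integral_cos_div_eq_sub hCi one_pos hA, add_sub_cancel]

lemma hasDerivAt_comp_mul_abs_sub (hCi : IsCosIntegral Ci) {a y x : ℝ} (hy : 0 < y)
    (hx : x ≠ a) :
    HasDerivAt (fun x => Ci (y * |x - a|)) (cos (y * (x - a)) / (x - a)) x := by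
  rcases hx.lt_or_gt with hx | hx
  · have h := (hCi.hasDerivAt (mul_pos hy (abs_pos_of_neg (sub_neg.2 hx)))).comp x
      (((hasDerivAt_abs_neg (sub_neg.2 hx)).comp x ((hasDerivAt_id x).sub_const a)).const_mul y)
    refine h.congr_deriv ?_
    rw [abs_of_neg (sub_neg.2 hx), mul_neg, cos_neg]
    field_simp [(sub_neg.2 hx).ne]
  · have h := (hCi.hasDerivAt (mul_pos hy (abs_pos_of_pos (sub_pos.2 hx)))).comp x
      (((hasDerivAt_abs_pos (sub_pos.2 hx)).comp x ((hasDerivAt_id x).sub_const a)).const_mul y)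
    refine h.congr_deriv ?_
    rw [abs_of_pos (sub_pos.2 hx)]
    field_simp [(sub_pos.2 hx).ne']

end IsCosIntegral

def sinDivSqSubSqPrimitive (Ci : ℝ → ℝ) (a y x : ℝ) : ℝ :=
  (cos (a * y) * (Si (y * (x + a)) - Si (y * (x - a))) -
    sin (a * y) * (Ci (y * |x - a|) + Ci (y * (x + a)))) / (2 * a)

lemma hasDerivAt_sinDivSqSubSqPrimitive {Ci : ℝ → ℝ} (hCi : IsCosIntegral Ci) {a y x : ℝ}
    (ha : a ≠ 0) (hy : 0 < y) (hxa : x ≠ a) (hx : 0 < x + a) :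
    HasDerivAt (sinDivSqSubSqPrimitive Ci a y) (sin (y * x) / (a ^ 2 - x ^ 2)) x := by
  have hplus : HasDerivAt (fun x => y * (x + a)) y x := by
    simpa using ((hasDerivAt_id x).add_const a).const_mul y
  have hminus : HasDerivAt (fun x => y * (x - a)) y x := by
    simpa using ((hasDerivAt_id x).sub_const a).const_mul y
  have hSi := ((hasDerivAt_Si _).comp x hplus).sub ((hasDerivAt_Si _).comp x hminus)
  have hCi' := (hCi.hasDerivAt_comp_mul_abs_sub hy hxa).add
    ((hCi.hasDerivAt (mul_pos hy hx)).comp x hplus)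
  have h := ((hSi.const_mul (cos (a * y))).sub (hCi'.const_mul (sin (a * y)))).div_const (2 * a)
  refine h.congr_deriv ?_
  have hxa' : x - a ≠ 0 := sub_ne_zero.2 hxa
  have hsin_plus :
      sin (y * x) = sin (y * (x + a)) * cos (a * y) - cos (y * (x + a)) * sin (a * y) := by
    rw [← sin_sub]; ring_nf
  have hsin_minus :
      sin (y * x) = sin (y * (x - a)) * cos (a * y) + cos (y * (x - a)) * sin (a * y) := by
    rw [← sin_add]; ring_nf
  rw [sinc_of_ne_zero (mul_pos hy hx).ne', sinc_of_ne_zero (mul_ne_zero hy.ne' hxa')]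
  have hsq : a ^ 2 - x ^ 2 ≠ 0 := by
    rw [sq_sub_sq]; exact mul_ne_zero (by linarith : 0 < a + x).ne' (sub_ne_zero.2 hxa.symm)
  field_simp
  linear_combination
    (-(x - a) * (a ^ 2 - x ^ 2)) * hsin_plus + ((x + a) * (a ^ 2 - x ^ 2)) * hsin_minus

lemma tendsto_sinDivSqSubSqPrimitive_atTop {Ci : ℝ → ℝ} (hCi : IsCosIntegral Ci) {a y : ℝ}
    (hy : 0 < y) : Tendsto (sinDivSqSubSqPrimitive Ci a y) atTop (𝓝 0) := by
  have hlin : ∀ c, Tendsto (fun x => y * (x + c)) atTop atTop := fun c =>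
    (tendsto_atTop_add_const_right _ c tendsto_id).const_mul_atTop hy
  have hSi : Tendsto (fun x => Si (y * (x + a)) - Si (y * (x - a))) atTop (𝓝 0) := by
    refine ((tendsto_Si_add_sub_Si (2 * a * y)).comp (hlin (-a))).congr fun x => ?_
    simp only [Function.comp_apply]
    ring_nf
  have hCi_abs : Tendsto (fun x => Ci (y * |x - a|)) atTop (𝓝 0) :=
    hCi.tendsto_atTop.comp <| (tendsto_abs_atTop_atTop.comp
      (tendsto_atTop_add_const_right _ (-a) tendsto_id)).const_mul_atTop hy
  convert ((hSi.const_mul (cos (a * y))).sub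
    ((hCi_abs.add (hCi.tendsto_atTop.comp (hlin a))).const_mul (sin (a * y)))).div_const (2 * a)
    using 1
  · rfl
  · simp

lemma sinDivSqSubSqPrimitive_zero (Ci : ℝ → ℝ) {a : ℝ} (ha : 0 < a) (y : ℝ) :
    sinDivSqSubSqPrimitive Ci a y 0 =
      (cos (a * y) * Si (a * y) - sin (a * y) * Ci (a * y)) / a := by
  simp only [sinDivSqSubSqPrimitive, zero_add, zero_sub, abs_neg, abs_of_pos ha, mul_neg, Si_neg,
    mul_comm y a]
  field_simp
  ring

lemma tendsto_sinDivSqSubSqPrimitive_jump {Ci : ℝ → ℝ} (hCi : IsCosIntegral Ci) {a y : ℝ}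
    (ha : 0 < a) (hy : 0 < y) :
    Tendsto (fun δ =>
        sinDivSqSubSqPrimitive Ci a y (a + δ) - sinDivSqSubSqPrimitive Ci a y (a - δ))
      (𝓝 0) (𝓝 0) := by
  have hsplit : (fun δ => sinDivSqSubSqPrimitive Ci a y (a + δ) -
      sinDivSqSubSqPrimitive Ci a y (a - δ)) = fun δ => (cos (a * y) *
        ((Si (y * (2 * a + δ)) - Si (y * δ)) - (Si (y * (2 * a - δ)) - Si (y * -δ))) -
        sin (a * y) * (Ci (y * (2 * a + δ)) - Ci (y * (2 * a - δ)))) / (2 * a) := by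
    ext δ
    simp only [sinDivSqSubSqPrimitive, add_sub_cancel_left, sub_sub_cancel_left, abs_neg]
    ring_nf
  have hCi_cont : ContinuousAt Ci (y * (2 * a)) := (hCi.hasDerivAt (by positivity)).continuousAt
  have hCi_plus : ContinuousAt (fun δ => Ci (y * (2 * a + δ))) 0 :=
    ContinuousAt.comp (by simpa using hCi_cont) (by fun_prop)
  have hCi_minus : ContinuousAt (fun δ => Ci (y * (2 * a - δ))) 0 :=
    ContinuousAt.comp (by simpa using hCi_cont) (by fun_prop)
  have hSi : Continuous fun δ =>
      (Si (y * (2 * a + δ)) - Si (y * δ)) - (Si (y * (2 * a - δ)) - Si (y * -δ)) := by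
    fun_prop
  rw [hsplit]
  convert (((hSi.tendsto 0).const_mul (cos (a * y))).sub
    ((hCi_plus.tendsto.sub hCi_minus.tendsto).const_mul (sin (a * y)))).div_const (2 * a) using 2
  simp

lemma continuousOn_sin_mul_div_sq_sub_sq {a b : ℝ} (y : ℝ) (hba : b < a) :
    ContinuousOn (fun x => sin (y * x) / (a ^ 2 - x ^ 2)) (Icc 0 b) :=
  (continuous_sin.comp (continuous_const_mul y)).continuousOn.div (by fun_prop) fun x hx =>
    (by nlinarith [hx.1, hx.2] : 0 < a ^ 2 - x ^ 2).ne'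

lemma integrableOn_Ioi_inv_sub_sq {a b : ℝ} (hab : a < b) :
    IntegrableOn (fun x : ℝ => ((x - a) ^ 2)⁻¹) (Ioi b) := by
  refine integrableOn_Ioi_deriv_of_nonneg' (g := fun x => -(x - a)⁻¹) (l := 0) (fun x hx => ?_)
    (fun x _ => by positivity) ?_
  · have hxa : x - a ≠ 0 := (sub_pos.2 (hab.trans_le hx)).ne'
    exact (((hasDerivAt_id' x).sub_const a).inv hxa).neg.congr_deriv
      (by rw [neg_div, neg_neg, one_div])
  · simpa [sub_eq_add_neg] using (tendsto_inv_atTop_zero.comp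
      (tendsto_atTop_add_const_right _ (-a) tendsto_id)).neg

lemma integrableOn_Ioi_sin_mul_div_sq_sub_sq {a b : ℝ} (y : ℝ) (ha : 0 ≤ a) (hab : a < b) :
    IntegrableOn (fun x => sin (y * x) / (a ^ 2 - x ^ 2)) (Ioi b) := by
  refine (integrableOn_Ioi_inv_sub_sq hab).mono'
    (Measurable.aestronglyMeasurable (by fun_prop)) ?_
  filter_upwards [ae_restrict_mem measurableSet_Ioi] with x hx
  have hxa : 0 < x - a := sub_pos.2 (hab.trans hx)
  rw [norm_div, norm_eq_abs, norm_eq_abs, abs_of_neg (by nlinarith : a ^ 2 - x ^ 2 < 0),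
    ← one_div]
  exact div_le_div₀ zero_le_one (abs_sin_le_one _) (by positivity) (by nlinarith)

lemma integral_Ioo_sin_mul_div_sq_sub_sq {Ci : ℝ → ℝ} (hCi : IsCosIntegral Ci) {a b y : ℝ}
    (ha : 0 < a) (hy : 0 < y) (hb : 0 ≤ b) (hba : b < a) :
    ∫ x in Ioo 0 b, sin (y * x) / (a ^ 2 - x ^ 2) =
      sinDivSqSubSqPrimitive Ci a y b - sinDivSqSubSqPrimitive Ci a y 0 := by
  rw [← integral_Ioc_eq_integral_Ioo, ← intervalIntegral.integral_of_le hb]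
  refine integral_eq_sub_of_hasDerivAt (fun x hx => ?_)
    ((continuousOn_sin_mul_div_sq_sub_sq y hba).intervalIntegrable_of_Icc hb)
  rw [uIcc_of_le hb] at hx
  exact hasDerivAt_sinDivSqSubSqPrimitive hCi ha.ne' hy (by linarith [hx.2]) (by linarith [hx.1])

lemma integral_Ioi_sin_mul_div_sq_sub_sq {Ci : ℝ → ℝ} (hCi : IsCosIntegral Ci) {a b y : ℝ}
    (ha : 0 < a) (hy : 0 < y) (hab : a < b) :
    ∫ x in Ioi b, sin (y * x) / (a ^ 2 - x ^ 2) = -sinDivSqSubSqPrimitive Ci a y b := by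
  rw [integral_Ioi_of_hasDerivAt_of_tendsto' (fun x hx => ?_)
    (integrableOn_Ioi_sin_mul_div_sq_sub_sq y ha.le hab)
    (tendsto_sinDivSqSubSqPrimitive_atTop hCi hy), zero_sub]
  have hx : a < x := hab.trans_le hx
  exact hasDerivAt_sinDivSqSubSqPrimitive hCi ha.ne' hy hx.ne' (by linarith)

lemma setOf_pos_and_lt_abs_sub {a δ : ℝ} (had : 0 ≤ a + δ) :
    {x : ℝ | 0 < x ∧ δ < |x - a|} = Ioo 0 (a - δ) ∪ Ioi (a + δ) := by
  ext x
  simp only [mem_ofPred_eq, mem_union, mem_Ioo, mem_Ioi, lt_abs]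
  constructor
  · rintro ⟨hx, h | h⟩
    · exact Or.inr (by linarith)
    · exact Or.inl ⟨hx, by linarith⟩
  · rintro (⟨hx, hxa⟩ | hx)
    · exact ⟨hx, Or.inr (by linarith)⟩
    · exact ⟨by linarith, Or.inl (by linarith)⟩

lemma integral_setOf_lt_abs_sub_sin_mul_div_sq_sub_sq {Ci : ℝ → ℝ} (hCi : IsCosIntegral Ci)
    {a y δ : ℝ} (ha : 0 < a) (hy : 0 < y) (hδ : 0 < δ) (hδa : δ < a) :
    ∫ x in {x : ℝ | 0 < x ∧ δ < |x - a|}, sin (y * x) / (a ^ 2 - x ^ 2) =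
      -sinDivSqSubSqPrimitive Ci a y 0 -
        (sinDivSqSubSqPrimitive Ci a y (a + δ) - sinDivSqSubSqPrimitive Ci a y (a - δ)) := by
  have hdisj : Disjoint (Ioo 0 (a - δ)) (Ioi (a + δ)) :=
    disjoint_left.2 fun x hx hx' => by linarith [hx.2, hx'.out]
  have hleft : IntegrableOn (fun x => sin (y * x) / (a ^ 2 - x ^ 2)) (Ioo 0 (a - δ)) :=
    (continuousOn_sin_mul_div_sq_sub_sq y (by linarith)).integrableOn_Icc.mono_set
      Ioo_subset_Icc_self
  rw [setOf_pos_and_lt_abs_sub (by linarith), setIntegral_union hdisj measurableSet_Ioi hleft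
    (integrableOn_Ioi_sin_mul_div_sq_sub_sq y ha.le (by linarith)),
    integral_Ioo_sin_mul_div_sq_sub_sq hCi ha hy (by linarith) (by linarith),
    integral_Ioi_sin_mul_div_sq_sub_sq hCi ha hy (by linarith)]
  ring

end

/-- **A principal value integral formula.** For all `a > 0` and `y > 0`,
`p.v. ∫_0^∞ sin(yx)/(a² − x²) dx = (1/a)[sin(ay)·Ci(ay) − cos(ay)·Si(ay)]`,
where `Ci(u) = −∫_u^∞ cos t / t dt` is the cosine integral and
`Si(u) = ∫_0^u sin t / t dt` is the sine integral. -/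
theorem pv_integral_sin_div_sq_sub_sq (Ci : ℝ → ℝ)
    -- Ci is the cosine integral: Ci(u) = −∫_u^∞ cos t / t dt (improper integral)
    (hCi : ∀ u : ℝ, 0 < u →
      Filter.Tendsto (fun A : ℝ => ∫ t in u..A, Real.cos t / t)
        Filter.atTop (nhds (-Ci u))) :
    ∀ a y : ℝ, 0 < a → 0 < y →
      Filter.Tendsto (fun δ : ℝ =>
          ∫ x in {x : ℝ | 0 < x ∧ δ < |x - a|}, Real.sin (y * x) / (a ^ 2 - x ^ 2))
        (nhdsWithin 0 (Set.Ioi 0))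
        (nhds ((1 / a) *
          (Real.sin (a * y) * Ci (a * y) -
            Real.cos (a * y) * ∫ t in (0 : ℝ)..(a * y), Real.sin t / t))) := by
  intro a y ha hy
  have hjump := (tendsto_sinDivSqSubSqPrimitive_jump hCi ha hy).mono_left
    (nhdsWithin_le_nhds (s := Ioi 0))
  convert (hjump.const_sub (-sinDivSqSubSqPrimitive Ci a y 0)).congr' ?_ using 2
  · rw [sub_zero, sinDivSqSubSqPrimitive_zero Ci ha, Si]
    ring
  · filter_upwards [Ioo_mem_nhdsGT ha] with δ hδ
    exact (integral_setOf_lt_abs_sub_sin_mul_div_sq_sub_sq hCi ha hy hδ.1 hδ.2).symm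
end
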